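/- Let m ≥ 1 and let X₁, …, X_m be elements of an integral domain. Let A be the 2m×2m matrix from the confluent Vandermonde construction: rows 1 through m are (Xᵢ⁰, …, Xᵢ^{2m−1}) and rows m+1 through 2m are (1·Xᵢ⁰, 2·Xᵢ¹, …, 2m·Xᵢ^{2m−1}). If the Xᵢ are pairwise distinct and all nonzero, then det A ≠ 0. -/
import Mathlib

open Polynomial

set_option maxRecDepth 8000
set_option maxHeartbeats 1000000

theorem det_confluent_vandermonde_ne_zero {R : Type*} [CommRing R] [IsDomain R]
    (m : ℕ) (hm : 1 ≤ m) (X : Fin m → R)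
    (hinj : Function.Injective X) (hne : ∀ i, X i ≠ 0) :
    Matrix.det (Matrix.of fun i j : Fin (2 * m) =>
      if h : (i : ℕ) < m then X ⟨i, h⟩ ^ (j : ℕ)
      else (((j : ℕ) + 1 : ℕ) : R) * X ⟨(i : ℕ) - m, by have := i.isLt; omega⟩ ^ (j : ℕ))
    ≠ 0 := by
  intro hdet
  obtain ⟨v, hv0, hv⟩ := Matrix.exists_mulVec_eq_zero_iff.2 hdet
  set K := FractionRing R
  set f : R →+* K := algebraMap R K with hf
  have hfinj : Function.Injective f := IsFractionRing.injective R K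
  set Y : Fin m → K := fun i => f (X i) with hY
  have hYinj : Function.Injective Y := fun a b h => hinj (hfinj h)
  have hYne : ∀ i, Y i ≠ 0 := fun i h => hne i (hfinj (by simpa using h))
  -- the polynomial
  set p : K[X] := ∑ j : Fin (2 * m), C (f (v j)) * Polynomial.X ^ (j : ℕ) with hp
  have hcoeff : ∀ j : Fin (2 * m), p.coeff (j : ℕ) = f (v j) := by
    intro j
    rw [hp, Polynomial.finset_sum_coeff]
    rw [Finset.sum_eq_single j]
    · simp
    · intro b _ hb
      have : (b : ℕ) ≠ (j : ℕ) := fun h => hb (Fin.val_injective h)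
      simp only [coeff_C_mul, coeff_X_pow, if_neg (Ne.symm this), mul_zero]
    · simp
  have hpne : p ≠ 0 := by
    obtain ⟨j0, hj0⟩ := Function.ne_iff.1 hv0
    intro h
    apply hj0
    have := hcoeff j0
    rw [h] at this
    simp only [coeff_zero] at this
    exact hfinj (by simpa using this.symm)
  -- row equations
  have hrow1 : ∀ i : Fin m, p.eval (Y i) = 0 := by
    intro i
    have hi : ((⟨(i : ℕ), by omega⟩ : Fin (2 * m)) : ℕ) < m := by simpa using i.isLt
    have h1 := congrFun hv ⟨(i : ℕ), by omega⟩
    simp only [Matrix.mulVec, dotProduct, Matrix.of_apply, dif_pos hi,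
      Pi.zero_apply] at h1
    have h1' : f (∑ j : Fin (2 * m), X i ^ (j : ℕ) * v j) = 0 := by
      rw [show (∑ j : Fin (2 * m), X i ^ (j : ℕ) * v j) = 0 from by simpa using h1, map_zero]
    rw [map_sum] at h1'
    simp only [map_mul, map_pow] at h1'
    rw [hp, Polynomial.eval_finset_sum]
    simp only [eval_mul, eval_C, eval_pow, eval_X]
    rw [show (∑ j : Fin (2 * m), f (v j) * Y i ^ (j : ℕ))
        = ∑ j : Fin (2 * m), Y i ^ (j : ℕ) * f (v j) from
      Finset.sum_congr rfl fun j _ => mul_comm _ _]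
    exact h1'
  have hrow2 : ∀ i : Fin m, (derivative (Polynomial.X * p)).eval (Y i) = 0 := by
    intro i
    have hi2 : (i : ℕ) + m < 2 * m := by omega
    have hni : ¬ (((⟨(i : ℕ) + m, hi2⟩ : Fin (2 * m)) : ℕ) < m) := by simp
    have h2 := congrFun hv ⟨(i : ℕ) + m, hi2⟩
    simp only [Matrix.mulVec, dotProduct, Matrix.of_apply, dif_neg hni,
      Pi.zero_apply] at h2
    have hsub : (⟨(i : ℕ) + m - m, by omega⟩ : Fin m) = i := by
      ext; simp
    rw [hsub] at h2
    have h2' : f (∑ j : Fin (2 * m), (((j : ℕ) + 1 : ℕ) : R) * X i ^ (j : ℕ) * v j) = 0 := by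
      rw [show (∑ j : Fin (2 * m), (((j : ℕ) + 1 : ℕ) : R) * X i ^ (j : ℕ) * v j) = 0 from by
        simpa using h2, map_zero]
    rw [map_sum] at h2'
    simp only [map_mul, map_pow, map_natCast] at h2'
    have hxp : Polynomial.X * p = ∑ j : Fin (2 * m), C (f (v j)) * Polynomial.X ^ ((j : ℕ) + 1) := by
      rw [hp, Finset.mul_sum]
      congr 1; funext j; ring
    rw [hxp, derivative_sum]
    rw [Polynomial.eval_finset_sum]
    have : ∀ j : Fin (2 * m),
        (derivative (C (f (v j)) * Polynomial.X ^ ((j : ℕ) + 1))).eval (Y i)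
          = (((j : ℕ) + 1 : ℕ) : K) * Y i ^ (j : ℕ) * f (v j) := by
      intro j
      rw [derivative_C_mul_X_pow, eval_mul, eval_C, eval_pow, eval_X,
        Nat.add_sub_cancel]
      push_cast
      ring
    rw [Finset.sum_congr rfl fun j _ => this j]
    exact h2'
  have hderiv : ∀ i : Fin m, (derivative p).eval (Y i) = 0 := by
    intro i
    have h := hrow2 i
    rw [derivative_mul, derivative_X, one_mul] at h
    simp only [eval_add, eval_mul, eval_X, hrow1 i, zero_add] at h
    rcases mul_eq_zero.1 h with h' | h'
    · exact absurd h' (hYne i)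
    · exact h'
  -- each Y i is a double root
  have hdvd : ∀ i : Fin m, (Polynomial.X - C (Y i)) ^ 2 ∣ p := by
    intro i
    have h2 : 1 < p.rootMultiplicity (Y i) :=
      (Polynomial.one_lt_rootMultiplicity_iff_isRoot hpne).2 ⟨hrow1 i, hderiv i⟩
    exact dvd_trans (pow_dvd_pow _ h2) (p.pow_rootMultiplicity_dvd (Y i))
  have hprod : (∏ i : Fin m, (Polynomial.X - C (Y i)) ^ 2) ∣ p :=
    Fintype.prod_dvd_of_coprime
      (fun a b hab => ((Polynomial.pairwise_coprime_X_sub_C hYinj hab).pow)) hdvd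
  have hdegprod : (∏ i : Fin m, (Polynomial.X - C (Y i)) ^ 2).natDegree = 2 * m := by
    rw [Polynomial.natDegree_prod _ _ fun i _ => pow_ne_zero _ (X_sub_C_ne_zero (Y i))]
    simp [natDegree_pow, mul_comm]
  have hle : 2 * m ≤ p.natDegree := by
    rw [← hdegprod]
    exact Polynomial.natDegree_le_of_dvd hprod hpne
  have hlt : p.natDegree < 2 * m := by
    have : p.natDegree ≤ 2 * m - 1 := by
      rw [hp]
      apply Polynomial.natDegree_sum_le_of_forall_le
      intro j _
      refine le_trans (Polynomial.natDegree_C_mul_le _ _) ?_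
      simp only [natDegree_X_pow]
      omega
    omega
  omega
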